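/- Let γ > 1, let p : (0,∞) → ℝ be continuously differentiable with p'(ρ) > 0 for all ρ > 0 and liminf_{ρ→∞} p(ρ)/ρ^γ ≥ p̲ for some constant p̲ > 0, and let P be a pressure potential for p. Then for every ρ̄ > 0 there exists a constant C > 0 such that ρ^γ ≤ C · E(ρ|ρ̄) for all ρ ≥ ρ̄ + 1. -/

import Mathlib

/-!
With `Q ρ = E(ρ|ρ̄) / ρ`, the pressure-potential relation `ρ P' - P = p` gives
`Q' ρ = (p ρ - p ρ̄) / ρ²`. As `p` is strictly increasing, `Q` increases on `[ρ̄, ∞)` from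
`Q ρ̄ = 0`, so `Q ≥ Q (ρ̄ + 1) > 0` on `[ρ̄ + 1, ∞)`. The liminf bound gives
`p ρ - p ρ̄ ≥ (p̲/4) ρ^γ` for large `ρ`, and integrating `Q'` yields `Q ρ ≳ ρ^(γ-1)` at infinity.
Together these bound `ρ^(γ-1) ≤ C Q ρ` on `[ρ̄ + 1, ∞)`; multiply by `ρ`.
-/

open Filter Set Real

theorem eventually_mul_le_of_lt_liminf_div {α : Type*} {l : Filter α} {f g : α → ℝ} {a b : ℝ}
    (ha : 0 < a) (hb : b < a) (h : a ≤ liminf (fun x => f x / g x) l)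
    (hg : ∀ᶠ x in l, 0 < g x) : ∀ᶠ x in l, b * g x ≤ f x := by
  -- the `liminf` of a function unbounded below is the junk value `0`, excluded by `0 < a`
  have hbdd : IsBoundedUnder (· ≥ ·) l (fun x => f x / g x) := by
    by_contra hnb
    rw [Real.liminf_of_not_isBoundedUnder hnb] at h
    linarith
  filter_upwards [eventually_lt_of_lt_liminf (hb.trans_le h) hbdd, hg] with x hlt hgx
  exact ((lt_div_iff₀ hgx).mp hlt).le

theorem eventually_half_mul_rpow_le_of_deriv {f f' : ℝ → ℝ} {a s : ℝ} (ha : 0 < a) (hs : 0 < s)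
    (hf : ∀ᶠ x in atTop, HasDerivAt f (f' x) x ∧ a * x ^ (s - 1) ≤ f' x) :
    ∀ᶠ x in atTop, a / (2 * s) * x ^ s ≤ f x := by
  obtain ⟨M, hM⟩ := eventually_atTop.mp (hf.and (eventually_gt_atTop 0))
  have hderiv : ∀ x, M ≤ x →
      HasDerivAt (fun y => f y - a / s * y ^ s) (f' x - a * x ^ (s - 1)) x := fun x hx => by
    have hpow := (Real.hasDerivAt_rpow_const (p := s) (Or.inl (hM x hx).2.ne')).const_mul (a / s)
    exact ((hM x hx).1.1.sub hpow).congr_deriv (by field_simp)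
  have hmono : MonotoneOn (fun y => f y - a / s * y ^ s) (Ici M) :=
    monotoneOn_of_hasDerivWithinAt_nonneg (convex_Ici M)
      (fun x hx => (hderiv x hx).continuousAt.continuousWithinAt)
      (fun x hx => (hderiv x (interior_subset hx)).hasDerivWithinAt)
      (fun x hx => sub_nonneg.2 (hM x (interior_subset hx)).1.2)
  have htend : Tendsto (fun x => a / (2 * s) * x ^ s) atTop atTop :=
    (tendsto_rpow_atTop hs).const_mul_atTop (by positivity)
  filter_upwards [eventually_ge_atTop M, htend.eventually_ge_atTop (a / s * M ^ s - f M)]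
    with x hxM hx
  have hle := hmono self_mem_Ici hxM hxM
  have hsplit : a / s * x ^ s = 2 * (a / (2 * s) * x ^ s) := by field_simp
  linarith

theorem exists_pos_le_mul_of_eventually_mul_le {u v : ℝ → ℝ} {x₀ c : ℝ}
    (hu : MonotoneOn u (Ici x₀)) (hv : MonotoneOn v (Ici x₀)) (hv₀ : 0 < v x₀) (hc : 0 < c)
    (hev : ∀ᶠ x in atTop, c * u x ≤ v x) : ∃ C > 0, ∀ x, x₀ ≤ x → u x ≤ C * v x := by
  obtain ⟨M, hM⟩ := eventually_atTop.mp hev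
  set N := max M x₀
  refine ⟨max c⁻¹ (|u N| / v x₀), by positivity, fun x hx => ?_⟩
  have hvx : v x₀ ≤ v x := hv self_mem_Ici hx hx
  rcases le_total x N with hxN | hNx
  · calc u x ≤ |u N| := (hu hx (le_max_right M x₀) hxN).trans (le_abs_self _)
      _ = |u N| / v x₀ * v x₀ := by field_simp
      _ ≤ |u N| / v x₀ * v x := by gcongr
      _ ≤ _ := by gcongr; exacts [hv₀.le.trans hvx, le_max_right c⁻¹ _]
  · calc u x = c⁻¹ * (c * u x) := by field_simp
      _ ≤ c⁻¹ * v x := by gcongr; exact hM x ((le_max_left M x₀).trans hNx)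
      _ ≤ _ := by gcongr; exacts [hv₀.le.trans hvx, le_max_left _ (|u N| / v x₀)]

def IsPressurePotential (p P P' : ℝ → ℝ) : Prop :=
  ∀ ρ > 0, HasDerivAt P (P' ρ) ρ ∧ ρ * P' ρ - P ρ = p ρ

def relEnergy (P P' : ℝ → ℝ) (ρbar ρ : ℝ) : ℝ :=
  P ρ - P' ρbar * (ρ - ρbar) - P ρbar

@[simp]
theorem relEnergy_self (P P' : ℝ → ℝ) (ρbar : ℝ) : relEnergy P P' ρbar ρbar = 0 := by
  simp [relEnergy]

namespace IsPressurePotential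

variable {p P P' : ℝ → ℝ} {ρbar : ℝ}

theorem hasDerivAt_relEnergy_div (hP : IsPressurePotential p P P') (hρbar : 0 < ρbar) {ρ : ℝ}
    (hρ : 0 < ρ) :
    HasDerivAt (fun x => relEnergy P P' ρbar x / x) ((p ρ - p ρbar) / ρ ^ 2) ρ := by
  have hE : HasDerivAt (relEnergy P P' ρbar) (P' ρ - P' ρbar) ρ :=
    ((hP ρ hρ).1.sub (((hasDerivAt_id ρ).sub_const ρbar).const_mul (P' ρbar))).sub_const
      (P ρbar) |>.congr_deriv (by ring)
  refine (hE.div (hasDerivAt_id ρ) hρ.ne').congr_deriv ?_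
  rw [← (hP ρ hρ).2, ← (hP ρbar hρbar).2]
  simp only [relEnergy, id]
  ring

theorem strictMonoOn_relEnergy_div (hP : IsPressurePotential p P P')
    (hp : StrictMonoOn p (Ioi 0)) (hρbar : 0 < ρbar) :
    StrictMonoOn (fun x => relEnergy P P' ρbar x / x) (Ici ρbar) := by
  refine strictMonoOn_of_hasDerivWithinAt_pos (convex_Ici ρbar)
    (fun x hx => (hP.hasDerivAt_relEnergy_div hρbar (hρbar.trans_le hx)).continuousAt
      |>.continuousWithinAt)
    (fun x hx => (hP.hasDerivAt_relEnergy_div hρbar (hρbar.trans_le (interior_subset hx)))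
      |>.hasDerivWithinAt) (fun x hx => ?_)
  rw [interior_Ici] at hx
  exact div_pos (sub_pos.2 (hp hρbar (hρbar.trans hx) hx)) (pow_pos (hρbar.trans hx) 2)

theorem eventually_mul_rpow_le_relEnergy_div (hP : IsPressurePotential p P P')
    (hρbar : 0 < ρbar) {γ a : ℝ} (hγ : 1 < γ) (ha : 0 < a)
    (hp : ∀ᶠ ρ in atTop, a * ρ ^ γ ≤ p ρ - p ρbar) :
    ∀ᶠ ρ in atTop, a / (2 * (γ - 1)) * ρ ^ (γ - 1) ≤ relEnergy P P' ρbar ρ / ρ := by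
  refine eventually_half_mul_rpow_le_of_deriv (f' := fun ρ => (p ρ - p ρbar) / ρ ^ 2)
    ha (by linarith) ?_
  filter_upwards [hp, eventually_gt_atTop 0] with ρ hpρ hρ
  refine ⟨hP.hasDerivAt_relEnergy_div hρbar hρ, ?_⟩
  rw [sub_sub, one_add_one_eq_two, rpow_sub hρ, rpow_two, ← mul_div_assoc]
  gcongr

end IsPressurePotential

theorem relative_energy_coercive_at_infinity_general
    (γ : ℝ) (hγ : 1 < γ)
    (p p' P P' : ℝ → ℝ)
    (hp : ∀ ρ > (0:ℝ), HasDerivAt p (p' ρ) ρ)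
    (hp'pos : ∀ ρ > (0:ℝ), 0 < p' ρ)
    (plow : ℝ) (hplow : 0 < plow)
    (hliminf : plow ≤ Filter.liminf (fun ρ : ℝ => p ρ / ρ ^ γ) Filter.atTop)
    (hP : ∀ ρ > (0:ℝ), HasDerivAt P (P' ρ) ρ)
    (hPp : ∀ ρ > (0:ℝ), ρ * P' ρ - P ρ = p ρ) :
    ∀ ρbar > (0:ℝ), ∃ C > (0:ℝ), ∀ ρ, ρbar + 1 ≤ ρ →
      ρ ^ γ ≤ C * (P ρ - P' ρbar * (ρ - ρbar) - P ρbar) := by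
  intro ρbar hρbar
  have hpot : IsPressurePotential p P P' := fun ρ hρ => ⟨hP ρ hρ, hPp ρ hρ⟩
  have hpmono : StrictMonoOn p (Ioi 0) :=
    strictMonoOn_of_hasDerivWithinAt_pos (convex_Ioi 0)
      (fun x hx => (hp x hx).continuousAt.continuousWithinAt)
      (fun x hx => (hp x (interior_subset hx)).hasDerivWithinAt)
      (fun x hx => hp'pos x (interior_subset hx))
  set Q := fun x => relEnergy P P' ρbar x / x
  have hQmono : StrictMonoOn Q (Ici ρbar) := hpot.strictMonoOn_relEnergy_div hpmono hρbar
  have hQpos : 0 < Q (ρbar + 1) := by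
    simpa [Q] using hQmono self_mem_Ici (by simp) (lt_add_one ρbar)
  have hp_growth : ∀ᶠ ρ in atTop, plow / 4 * ρ ^ γ ≤ p ρ - p ρbar := by
    have hpow : Tendsto (fun ρ : ℝ => plow / 4 * ρ ^ γ) atTop atTop :=
      (tendsto_rpow_atTop (by linarith)).const_mul_atTop (by positivity)
    filter_upwards [eventually_mul_le_of_lt_liminf_div hplow (half_lt_self hplow) hliminf
      ((eventually_gt_atTop 0).mono fun ρ hρ => rpow_pos_of_pos hρ γ),
      hpow.eventually_ge_atTop (p ρbar)] with ρ hlow hbar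
    linarith
  obtain ⟨C, hC, hbound⟩ := exists_pos_le_mul_of_eventually_mul_le (u := fun ρ => ρ ^ (γ - 1))
    (fun x hx y _ hxy => rpow_le_rpow (by linarith [mem_Ici.1 hx]) hxy (by linarith))
    (hQmono.monotoneOn.mono (Ici_subset_Ici.2 (by linarith))) hQpos (by positivity)
    (hpot.eventually_mul_rpow_le_relEnergy_div hρbar hγ (by positivity) hp_growth)
  refine ⟨C, hC, fun ρ hρ => ?_⟩
  have hρ0 : 0 < ρ := by linarith
  calc ρ ^ γ = ρ * ρ ^ (γ - 1) := by rw [rpow_sub_one hρ0.ne']; field_simp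
    _ ≤ ρ * (C * Q ρ) := mul_le_mul_of_nonneg_left (hbound ρ hρ) hρ0.le
    _ = C * relEnergy P P' ρbar ρ := by simp only [Q]; field_simp

/-- Let `γ > 1`, let `p : (0,∞) → ℝ` be continuously differentiable with
`p' ρ > 0` for all `ρ > 0` and `liminf_{ρ→∞} p(ρ)/ρ^γ ≥ p̲` for some constant `p̲ > 0`, and
let `P` be a pressure potential for `p`. Then for every `ρ̄ > 0` there exists `C > 0` such
that `ρ^γ ≤ C · E(ρ|ρ̄)` for all `ρ ≥ ρ̄ + 1`, where
`E(ρ|ρ̄) = P(ρ) − P'(ρ̄)(ρ − ρ̄) − P(ρ̄)`. -/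
theorem relative_energy_coercive_at_infinity
    (γ : ℝ) (hγ : 1 < γ)
    (p p' P P' : ℝ → ℝ)
    (hp : ∀ ρ > (0:ℝ), HasDerivAt p (p' ρ) ρ)
    (hp'cont : ContinuousOn p' (Set.Ioi (0:ℝ)))
    (hp'pos : ∀ ρ > (0:ℝ), 0 < p' ρ)
    (plow : ℝ) (hplow : 0 < plow)
    (hliminf : plow ≤ Filter.liminf (fun ρ : ℝ => p ρ / ρ ^ γ) Filter.atTop)
    (hP : ∀ ρ > (0:ℝ), HasDerivAt P (P' ρ) ρ)
    (hPp : ∀ ρ > (0:ℝ), ρ * P' ρ - P ρ = p ρ) :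
    ∀ ρbar > (0:ℝ), ∃ C > (0:ℝ), ∀ ρ, ρbar + 1 ≤ ρ →
      ρ ^ γ ≤ C * (P ρ - P' ρbar * (ρ - ρbar) - P ρbar) :=
  relative_energy_coercive_at_infinity_general γ hγ p p' P P' hp hp'pos plow hplow hliminf hP hPp
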